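/- arXiv:2012.07595 — 4 statements merged into one kernel-verified Lean document; each statement's English description precedes it below -/
import Mathlib

section
/- (Generalized Rayleigh quotient as least-squares solution.) Let A ∈ ℝ^{l×m×n} and let U ∈ ℝ^{l×r₁}, V ∈ ℝ^{m×r₂}, W ∈ ℝ^{n×r₃} have orthonormal columns. Then the least squares problem min_F ‖A − (U,V,W)·F‖_F over core tensors F ∈ ℝ^{r₁×r₂×r₃} has the unique solution F = A·(U,V,W), i.e., F(λ,μ,ν) = ∑_{i,j,k} U(i,λ) V(j,μ) W(k,ν) A(i,j,k). -/
open scoped BigOperators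
open Matrix

/-- Frobenius norm of a third-order tensor. -/
noncomputable def frob {l m n : ℕ} (A : Fin l → Fin m → Fin n → ℝ) : ℝ :=
  Real.sqrt (∑ i, ∑ j, ∑ k, (A i j k) ^ 2)

/-- Multilinear multiplication of a core tensor by three matrices. -/
def tmul {l m n r1 r2 r3 : ℕ} (U : Matrix (Fin l) (Fin r1) ℝ)
    (V : Matrix (Fin m) (Fin r2) ℝ) (W : Matrix (Fin n) (Fin r3) ℝ)
    (F : Fin r1 → Fin r2 → Fin r3 → ℝ) : Fin l → Fin m → Fin n → ℝ :=
  fun i j k => ∑ a, ∑ b, ∑ c, U i a * V j b * W k c * F a b c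

/-- Contracted product `A·(U,V,W)` (generalized Rayleigh quotient). -/
def contr {l m n r1 r2 r3 : ℕ} (A : Fin l → Fin m → Fin n → ℝ)
    (U : Matrix (Fin l) (Fin r1) ℝ) (V : Matrix (Fin m) (Fin r2) ℝ)
    (W : Matrix (Fin n) (Fin r3) ℝ) : Fin r1 → Fin r2 → Fin r3 → ℝ :=
  fun a b c => ∑ i, ∑ j, ∑ k, U i a * V j b * W k c * A i j k

/-- Inner product of third-order tensors. -/
def ip3 {p q r : ℕ} (X Y : Fin p → Fin q → Fin r → ℝ) : ℝ :=
  ∑ i, ∑ j, ∑ k, X i j k * Y i j k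

lemma sum3_swap {a1 a2 a3 b1 b2 b3 : ℕ}
    (f : Fin a1 → Fin a2 → Fin a3 → Fin b1 → Fin b2 → Fin b3 → ℝ) :
    ∑ x, ∑ y, ∑ z, ∑ u, ∑ v, ∑ w, f x y z u v w
      = ∑ u, ∑ v, ∑ w, ∑ x, ∑ y, ∑ z, f x y z u v w := by
  have h1 : ∑ x, ∑ y, ∑ z, ∑ u, ∑ v, ∑ w, f x y z u v w
      = ∑ p : Fin a1 × Fin a2 × Fin a3, ∑ q : Fin b1 × Fin b2 × Fin b3,
          f p.1 p.2.1 p.2.2 q.1 q.2.1 q.2.2 := by simp [Fintype.sum_prod_type]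
  have h2 : ∑ u, ∑ v, ∑ w, ∑ x, ∑ y, ∑ z, f x y z u v w
      = ∑ q : Fin b1 × Fin b2 × Fin b3, ∑ p : Fin a1 × Fin a2 × Fin a3,
          f p.1 p.2.1 p.2.2 q.1 q.2.1 q.2.2 := by simp [Fintype.sum_prod_type]
  rw [h1, h2, Finset.sum_comm]

lemma ip3_adjoint {l m n r1 r2 r3 : ℕ}
    (A : Fin l → Fin m → Fin n → ℝ)
    (U : Matrix (Fin l) (Fin r1) ℝ) (V : Matrix (Fin m) (Fin r2) ℝ)
    (W : Matrix (Fin n) (Fin r3) ℝ) (G : Fin r1 → Fin r2 → Fin r3 → ℝ) :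
    ip3 A (tmul U V W G) = ip3 (contr A U V W) G := by
  unfold ip3 tmul contr
  have lhs : (∑ i, ∑ j, ∑ k, A i j k * ∑ a, ∑ b, ∑ c, U i a * V j b * W k c * G a b c)
      = ∑ i, ∑ j, ∑ k, ∑ a, ∑ b, ∑ c,
          (U i a * V j b * W k c * A i j k) * G a b c := by
    simp only [Finset.mul_sum]
    refine Finset.sum_congr rfl fun i _ => Finset.sum_congr rfl fun j _ =>
      Finset.sum_congr rfl fun k _ => Finset.sum_congr rfl fun a _ =>
      Finset.sum_congr rfl fun b _ => Finset.sum_congr rfl fun c _ => by ring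
  rw [lhs, sum3_swap]
  simp only [Finset.sum_mul]

lemma contr_tmul {l m n r1 r2 r3 : ℕ}
    (U : Matrix (Fin l) (Fin r1) ℝ) (V : Matrix (Fin m) (Fin r2) ℝ)
    (W : Matrix (Fin n) (Fin r3) ℝ)
    (hU : Uᵀ * U = 1) (hV : Vᵀ * V = 1) (hW : Wᵀ * W = 1)
    (F : Fin r1 → Fin r2 → Fin r3 → ℝ) :
    contr (tmul U V W F) U V W = F := by
  have hUo : ∀ a a' : Fin r1, (∑ i, U i a * U i a') = if a = a' then 1 else 0 := by
    intro a a'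
    have := congrFun (congrFun hU a) a'
    simpa [Matrix.mul_apply, Matrix.transpose_apply, Matrix.one_apply] using this
  have hVo : ∀ b b' : Fin r2, (∑ j, V j b * V j b') = if b = b' then 1 else 0 := by
    intro b b'
    have := congrFun (congrFun hV b) b'
    simpa [Matrix.mul_apply, Matrix.transpose_apply, Matrix.one_apply] using this
  have hWo : ∀ c c' : Fin r3, (∑ k, W k c * W k c') = if c = c' then 1 else 0 := by
    intro c c'
    have := congrFun (congrFun hW c) c'
    simpa [Matrix.mul_apply, Matrix.transpose_apply, Matrix.one_apply] using this
  funext a b c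
  unfold contr tmul
  have step1 : (∑ i, ∑ j, ∑ k, U i a * V j b * W k c *
        ∑ a', ∑ b', ∑ c', U i a' * V j b' * W k c' * F a' b' c')
      = ∑ i, ∑ j, ∑ k, ∑ a', ∑ b', ∑ c',
          (U i a * U i a') * ((V j b * V j b') * ((W k c * W k c') * F a' b' c')) := by
    simp only [Finset.mul_sum]
    refine Finset.sum_congr rfl fun i _ => Finset.sum_congr rfl fun j _ =>
      Finset.sum_congr rfl fun k _ => Finset.sum_congr rfl fun a' _ =>
      Finset.sum_congr rfl fun b' _ => Finset.sum_congr rfl fun c' _ => by ring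
  rw [step1, sum3_swap]
  have step2 : ∀ a' b' c', (∑ i, ∑ j, ∑ k,
        (U i a * U i a') * ((V j b * V j b') * ((W k c * W k c') * F a' b' c')))
      = (∑ i, U i a * U i a') * ((∑ j, V j b * V j b') *
          ((∑ k, W k c * W k c') * F a' b' c')) := by
    intro a' b' c'
    simp only [← Finset.mul_sum, ← Finset.sum_mul]
  simp only [step2, hUo, hVo, hWo]
  simp [Finset.sum_ite_eq', Finset.mem_univ]

lemma ip3_nonneg {p q r : ℕ} (X : Fin p → Fin q → Fin r → ℝ) : 0 ≤ ip3 X X :=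
  Finset.sum_nonneg fun _ _ => Finset.sum_nonneg fun _ _ =>
    Finset.sum_nonneg fun _ _ => mul_self_nonneg _

lemma ip3_pos {p q r : ℕ} (X : Fin p → Fin q → Fin r → ℝ) (hX : X ≠ 0) :
    0 < ip3 X X := by
  obtain ⟨i, j, k, hijk⟩ : ∃ i j k, X i j k ≠ 0 := by
    by_contra h
    push_neg at h
    exact hX (funext fun i => funext fun j => funext fun k => h i j k)
  have h1 : X i j k * X i j k ≤ ∑ k', X i j k' * X i j k' :=
    Finset.single_le_sum (f := fun k' => X i j k' * X i j k')
      (fun _ _ => mul_self_nonneg _) (Finset.mem_univ k)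
  have h2 : (∑ k', X i j k' * X i j k') ≤ ∑ j', ∑ k', X i j' k' * X i j' k' :=
    Finset.single_le_sum (f := fun j' => ∑ k', X i j' k' * X i j' k')
      (fun _ _ => Finset.sum_nonneg fun _ _ => mul_self_nonneg _) (Finset.mem_univ j)
  have h3 : (∑ j', ∑ k', X i j' k' * X i j' k')
      ≤ ∑ i', ∑ j', ∑ k', X i' j' k' * X i' j' k' :=
    Finset.single_le_sum (f := fun i' => ∑ j', ∑ k', X i' j' k' * X i' j' k')
      (fun _ _ => Finset.sum_nonneg fun _ _ => Finset.sum_nonneg fun _ _ =>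
        mul_self_nonneg _) (Finset.mem_univ i)
  exact lt_of_lt_of_le (mul_self_pos.mpr hijk) (h1.trans (h2.trans h3))

lemma tmul_sub {l m n r1 r2 r3 : ℕ} (U : Matrix (Fin l) (Fin r1) ℝ)
    (V : Matrix (Fin m) (Fin r2) ℝ) (W : Matrix (Fin n) (Fin r3) ℝ)
    (F G : Fin r1 → Fin r2 → Fin r3 → ℝ) :
    tmul U V W (F - G) = tmul U V W F - tmul U V W G := by
  funext i j k
  simp [tmul, mul_sub, Finset.sum_sub_distrib]

lemma contr_sub {l m n r1 r2 r3 : ℕ} (A B : Fin l → Fin m → Fin n → ℝ)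
    (U : Matrix (Fin l) (Fin r1) ℝ) (V : Matrix (Fin m) (Fin r2) ℝ)
    (W : Matrix (Fin n) (Fin r3) ℝ) :
    contr (A - B) U V W = contr A U V W - contr B U V W := by
  funext a b c
  simp [contr, mul_sub, Finset.sum_sub_distrib]

lemma ip3_sub_left {p q r : ℕ} (X Y Z : Fin p → Fin q → Fin r → ℝ) :
    ip3 (X - Y) Z = ip3 X Z - ip3 Y Z := by
  simp [ip3, sub_mul, Finset.sum_sub_distrib]

lemma ip3_sub_right {p q r : ℕ} (X Y Z : Fin p → Fin q → Fin r → ℝ) :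
    ip3 X (Y - Z) = ip3 X Y - ip3 X Z := by
  simp [ip3, mul_sub, Finset.sum_sub_distrib]

lemma ip3_comm {p q r : ℕ} (X Y : Fin p → Fin q → Fin r → ℝ) :
    ip3 X Y = ip3 Y X := by
  simp [ip3, mul_comm]

lemma frob_eq_sqrt_ip3 {l m n : ℕ} (A : Fin l → Fin m → Fin n → ℝ) :
    frob A = Real.sqrt (ip3 A A) := by
  simp [frob, ip3, pow_two]

theorem rayleigh_least_squares {l m n r1 r2 r3 : ℕ}
    (A : Fin l → Fin m → Fin n → ℝ)
    (U : Matrix (Fin l) (Fin r1) ℝ) (V : Matrix (Fin m) (Fin r2) ℝ)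
    (W : Matrix (Fin n) (Fin r3) ℝ)
    (hU : Uᵀ * U = 1) (hV : Vᵀ * V = 1) (hW : Wᵀ * W = 1) :
    (∀ G : Fin r1 → Fin r2 → Fin r3 → ℝ,
        frob (A - tmul U V W (contr A U V W)) ≤ frob (A - tmul U V W G)) ∧
    (∀ G : Fin r1 → Fin r2 → Fin r3 → ℝ, G ≠ contr A U V W →
        frob (A - tmul U V W (contr A U V W)) < frob (A - tmul U V W G)) := by
  set F0 : Fin r1 → Fin r2 → Fin r3 → ℝ := contr A U V W with hF0
  have key : ∀ G : Fin r1 → Fin r2 → Fin r3 → ℝ,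
      ip3 (A - tmul U V W G) (A - tmul U V W G)
        = ip3 (A - tmul U V W F0) (A - tmul U V W F0) + ip3 (G - F0) (G - F0) := by
    intro G
    set E : Fin l → Fin m → Fin n → ℝ := A - tmul U V W F0 with hE
    set D : Fin r1 → Fin r2 → Fin r3 → ℝ := G - F0 with hD
    have hAG : A - tmul U V W G = E - tmul U V W D := by
      rw [hE, hD, tmul_sub]
      abel
    have hcE : contr E U V W = 0 := by
      rw [hE, contr_sub, contr_tmul U V W hU hV hW, ← hF0, sub_self]
    have hET : ip3 E (tmul U V W D) = 0 := by
      rw [ip3_adjoint, hcE]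
      simp [ip3]
    have hTT : ip3 (tmul U V W D) (tmul U V W D) = ip3 D D := by
      rw [ip3_adjoint, contr_tmul U V W hU hV hW]
    rw [hAG]
    simp only [ip3_sub_left, ip3_sub_right]
    rw [ip3_comm (tmul U V W D) E, hET, hTT]
    ring
  have hS0 : 0 ≤ ip3 (A - tmul U V W F0) (A - tmul U V W F0) := ip3_nonneg _
  constructor
  · intro G
    rw [frob_eq_sqrt_ip3, frob_eq_sqrt_ip3, key G]
    exact Real.sqrt_le_sqrt (by linarith [ip3_nonneg (G - F0)])
  · intro G hG
    rw [frob_eq_sqrt_ip3, frob_eq_sqrt_ip3, key G]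
    have hpos : 0 < ip3 (G - F0) (G - F0) := ip3_pos _ (sub_ne_zero.mpr hG)
    exact Real.sqrt_lt_sqrt hS0 (by linarith)
end

section
/- (Proposition on the gradient norm.) Let A ∈ ℝ^{l×m×n} and let (U₀,V₀,W₀) have orthonormal columns, with U₀ ∈ ℝ^{l×r₁}. Suppose U₁ has orthonormal columns, U₁ᵀU₀ = 0, and the span of [U₀ U₁] contains the column space of the mode-1 unfolding of A·₂,₃(V₀,W₀) (and analogously for V₁ and W₁ in modes 2 and 3). Set H₀ = A·(U₀,V₀,W₀), H₁¹ = A·(U₁,V₀,W₀), H₁² = A·(U₀,V₁,W₀), H₁³ = A·(U₀,V₀,W₁). Then for any completion (U₀ U⊥) to an orthogonal matrix (similarly for V, W), the Grassmann gradient of Φ(U,V,W) = ‖A·(U,V,W)‖² at (U₀,V₀,W₀) satisfies ‖∇‖² = ‖⟨H₀, H₁¹⟩_{−1}‖² + ‖⟨H₀, H₁²⟩_{−2}‖² + ‖⟨H₀, H₁³⟩_{−3}‖², where the gradient components are ⟨F⊥ᵏ, F⟩_{−k} with F = H₀ and F⊥¹ = A·(U⊥,V₀,W₀), etc. -/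
open scoped BigOperators
open Matrix

/-- Partial contraction `⟨X,Y⟩₋₁` in all modes but mode 1. -/
def pc1 {r1 s1 r2 r3 : ℕ} (X : Fin r1 → Fin r2 → Fin r3 → ℝ)
    (Y : Fin s1 → Fin r2 → Fin r3 → ℝ) : Matrix (Fin r1) (Fin s1) ℝ :=
  fun a b => ∑ μ, ∑ ν, X a μ ν * Y b μ ν

/-- Partial contraction `⟨X,Y⟩₋₂` in all modes but mode 2. -/
def pc2 {r1 r2 s2 r3 : ℕ} (X : Fin r1 → Fin r2 → Fin r3 → ℝ)
    (Y : Fin r1 → Fin s2 → Fin r3 → ℝ) : Matrix (Fin r2) (Fin s2) ℝ :=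
  fun a b => ∑ μ, ∑ ν, X μ a ν * Y μ b ν

/-- Partial contraction `⟨X,Y⟩₋₃` in all modes but mode 3. -/
def pc3 {r1 r2 r3 s3 : ℕ} (X : Fin r1 → Fin r2 → Fin r3 → ℝ)
    (Y : Fin r1 → Fin r2 → Fin s3 → ℝ) : Matrix (Fin r3) (Fin s3) ℝ :=
  fun a b => ∑ μ, ∑ ν, X μ ν a * Y μ ν b

/-- Squared Frobenius norm of a matrix. -/
def msq {p q : ℕ} (M : Matrix (Fin p) (Fin q) ℝ) : ℝ := ∑ a, ∑ b, (M a b) ^ 2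


private lemma sq_expand' {l p : ℕ} (M : Matrix (Fin l) (Fin p) ℝ) (x : Fin l → ℝ) :
    ∑ b, (∑ i, M i b * x i)^2 = ∑ i, x i * ((M * Mᵀ) *ᵥ x) i := by
  simp only [pow_two, Matrix.mul_apply, Matrix.mulVec, dotProduct,
    Matrix.transpose_apply, Finset.sum_mul, Finset.mul_sum]
  rw [Finset.sum_comm]
  refine Finset.sum_congr rfl fun i _ => ?_
  rw [Finset.sum_comm]
  exact Finset.sum_congr rfl fun i' _ => Finset.sum_congr rfl fun b _ => by ring

private lemma key' {l r s t : ℕ} (U0 : Matrix (Fin l) (Fin r) ℝ) (U1 : Matrix (Fin l) (Fin s) ℝ)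
    (Up : Matrix (Fin l) (Fin t) ℝ)
    (hU0 : U0ᵀ * U0 = 1) (hU1 : U1ᵀ * U1 = 1) (hU10 : U1ᵀ * U0 = 0)
    (hUp0 : Upᵀ * U0 = 0) (hUfull : U0 * U0ᵀ + Up * Upᵀ = 1)
    (x : Fin l → ℝ)
    (hx : x ∈ Submodule.span ℝ ((Set.range fun a => (fun i => U0 i a)) ∪
        (Set.range fun a => (fun i => U1 i a)))) :
    ∑ b, (∑ i, Up i b * x i)^2 = ∑ b, (∑ i, U1 i b * x i)^2 := by
  rw [Submodule.span_union, Submodule.mem_sup] at hx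
  obtain ⟨y, hy, z, hz, hyz⟩ := hx
  rw [Submodule.mem_span_range_iff_exists_fun] at hy hz
  obtain ⟨c, hc⟩ := hy
  obtain ⟨d, hd⟩ := hz
  have hxvec : x = U0 *ᵥ c + U1 *ᵥ d := by
    rw [← hyz, ← hc, ← hd]
    funext i
    simp [Matrix.mulVec, dotProduct, Finset.sum_apply, mul_comm]
  have hU01 : U0ᵀ * U1 = 0 := by
    have := congrArg Matrix.transpose hU10
    simpa using this
  have hP : (U0 * U0ᵀ) *ᵥ x + (U1 * U1ᵀ) *ᵥ x = x := by
    rw [hxvec]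
    simp only [Matrix.mulVec_add, Matrix.mulVec_mulVec]
    rw [Matrix.mul_assoc U0 U0ᵀ U0, hU0, Matrix.mul_assoc U0 U0ᵀ U1, hU01,
      Matrix.mul_assoc U1 U1ᵀ U0, hU10, Matrix.mul_assoc U1 U1ᵀ U1, hU1]
    simp
  have hUp' : Up * Upᵀ = 1 - U0 * U0ᵀ := by
    rw [eq_sub_iff_add_eq, add_comm]; exact hUfull
  rw [sq_expand', sq_expand', hUp']
  refine Finset.sum_congr rfl fun i _ => ?_
  congr 1
  have h1 : ((1 - U0 * U0ᵀ) *ᵥ x) i = x i - ((U0 * U0ᵀ) *ᵥ x) i := by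
    rw [Matrix.sub_mulVec, Matrix.one_mulVec]; rfl
  have h2 := congrFun hP i
  simp only [Pi.add_apply] at h2
  rw [h1]; linarith

private lemma mode1' {l m n r1 r2 r3 p q : ℕ}
    (A : Fin l → Fin m → Fin n → ℝ)
    (U0 : Matrix (Fin l) (Fin r1) ℝ) (V0 : Matrix (Fin m) (Fin r2) ℝ)
    (W0 : Matrix (Fin n) (Fin r3) ℝ)
    (U1 : Matrix (Fin l) (Fin p) ℝ) (Up : Matrix (Fin l) (Fin q) ℝ)
    (hU0 : U0ᵀ * U0 = 1) (hU1 : U1ᵀ * U1 = 1) (hU10 : U1ᵀ * U0 = 0)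
    (hUp0 : Upᵀ * U0 = 0) (hUfull : U0 * U0ᵀ + Up * Upᵀ = 1)
    (hspan : ∀ (μ : Fin r2) (ν : Fin r3),
      (fun i => ∑ j, ∑ k, V0 j μ * W0 k ν * A i j k) ∈
        Submodule.span ℝ ((Set.range fun a => (fun i => U0 i a)) ∪
          (Set.range fun s => (fun i => U1 i s)))) :
    msq (pc1 (contr A U0 V0 W0) (contr A Up V0 W0)) =
      msq (pc1 (contr A U0 V0 W0) (contr A U1 V0 W0)) := by
  set H := contr A U0 V0 W0 with hH
  set M : Fin r1 → Fin l → ℝ :=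
    fun a i => ∑ μ, ∑ ν, H a μ ν * ∑ j, ∑ k, V0 j μ * W0 k ν * A i j k with hM
  have hMmem : ∀ a, M a ∈ Submodule.span ℝ ((Set.range fun a => (fun i => U0 i a)) ∪
      (Set.range fun s => (fun i => U1 i s))) := by
    intro a
    have hMa : M a = ∑ μ, ∑ ν, H a μ ν • (fun i => ∑ j, ∑ k, V0 j μ * W0 k ν * A i j k) := by
      funext i
      simp [hM, Finset.sum_apply]
    rw [hMa]
    exact Submodule.sum_mem _ fun μ _ => Submodule.sum_mem _ fun ν _ =>
      Submodule.smul_mem _ _ (hspan μ ν)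
  have hrep : ∀ {p' : ℕ} (X : Matrix (Fin l) (Fin p') ℝ) (a : Fin r1) (b : Fin p'),
      pc1 H (contr A X V0 W0) a b = ∑ i, X i b * M a i := by
    intro p' X a b
    simp only [pc1, contr, hM, Finset.mul_sum, Finset.sum_mul]
    rw [show (∑ μ : Fin r2, ∑ ν : Fin r3, ∑ i : Fin l, ∑ j : Fin m, ∑ k : Fin n,
          H a μ ν * (X i b * V0 j μ * W0 k ν * A i j k))
        = ∑ i : Fin l, ∑ μ : Fin r2, ∑ ν : Fin r3, ∑ j : Fin m, ∑ k : Fin n,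
          H a μ ν * (X i b * V0 j μ * W0 k ν * A i j k) from
      (Finset.sum_congr rfl fun μ _ => Finset.sum_comm).trans Finset.sum_comm]
    refine Finset.sum_congr rfl fun i _ => Finset.sum_congr rfl fun μ _ =>
      Finset.sum_congr rfl fun ν _ => Finset.sum_congr rfl fun j _ =>
      Finset.sum_congr rfl fun k _ => by ring
  unfold msq
  calc ∑ a, ∑ b, (pc1 H (contr A Up V0 W0) a b) ^ 2
      = ∑ a, ∑ b, (∑ i, Up i b * M a i) ^ 2 := by
        exact Finset.sum_congr rfl fun a _ => Finset.sum_congr rfl fun b _ => by rw [hrep]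
    _ = ∑ a, ∑ b, (∑ i, U1 i b * M a i) ^ 2 :=
        Finset.sum_congr rfl fun a _ =>
          key' U0 U1 Up hU0 hU1 hU10 hUp0 hUfull (M a) (hMmem a)
    _ = ∑ a, ∑ b, (pc1 H (contr A U1 V0 W0) a b) ^ 2 := by
        exact Finset.sum_congr rfl fun a _ => Finset.sum_congr rfl fun b _ => by rw [hrep]

private lemma contr_swap12' {l m n r1 r2 r3 : ℕ} (A : Fin l → Fin m → Fin n → ℝ)
    (U : Matrix (Fin l) (Fin r1) ℝ) (V : Matrix (Fin m) (Fin r2) ℝ)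
    (W : Matrix (Fin n) (Fin r3) ℝ) (a : Fin r1) (b : Fin r2) (c : Fin r3) :
    contr (fun j i k => A i j k) V U W b a c = contr A U V W a b c := by
  simp only [contr]
  rw [Finset.sum_comm]
  exact Finset.sum_congr rfl fun i _ => Finset.sum_congr rfl fun j _ =>
    Finset.sum_congr rfl fun k _ => by ring

private lemma contr_swap13' {l m n r1 r2 r3 : ℕ} (A : Fin l → Fin m → Fin n → ℝ)
    (U : Matrix (Fin l) (Fin r1) ℝ) (V : Matrix (Fin m) (Fin r2) ℝ)
    (W : Matrix (Fin n) (Fin r3) ℝ) (a : Fin r1) (b : Fin r2) (c : Fin r3) :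
    contr (fun k j i => A i j k) W V U c b a = contr A U V W a b c := by
  simp only [contr]
  rw [show (∑ k : Fin n, ∑ j : Fin m, ∑ i : Fin l, W k c * V j b * U i a * A i j k)
      = ∑ i : Fin l, ∑ j : Fin m, ∑ k : Fin n, W k c * V j b * U i a * A i j k from
    ((Finset.sum_congr rfl fun k _ => Finset.sum_comm).trans Finset.sum_comm).trans
      (Finset.sum_congr rfl fun i _ => Finset.sum_comm)]
  exact Finset.sum_congr rfl fun i _ => Finset.sum_congr rfl fun j _ =>
    Finset.sum_congr rfl fun k _ => by ring

theorem grassmann_gradient_norm {l m n r1 r2 r3 s1 s2 s3 t1 t2 t3 : ℕ}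
    (A : Fin l → Fin m → Fin n → ℝ)
    (U0 : Matrix (Fin l) (Fin r1) ℝ) (V0 : Matrix (Fin m) (Fin r2) ℝ)
    (W0 : Matrix (Fin n) (Fin r3) ℝ)
    (U1 : Matrix (Fin l) (Fin s1) ℝ) (V1 : Matrix (Fin m) (Fin s2) ℝ)
    (W1 : Matrix (Fin n) (Fin s3) ℝ)
    (hU0 : U0ᵀ * U0 = 1) (hV0 : V0ᵀ * V0 = 1) (hW0 : W0ᵀ * W0 = 1)
    (hU1 : U1ᵀ * U1 = 1) (hV1 : V1ᵀ * V1 = 1) (hW1 : W1ᵀ * W1 = 1)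
    (hU10 : U1ᵀ * U0 = 0) (hV10 : V1ᵀ * V0 = 0) (hW10 : W1ᵀ * W0 = 0)
    -- the span of [U₀ U₁] contains the mode-1 fibers of A·₂,₃(V₀,W₀):
    (hspanU : ∀ (μ : Fin r2) (ν : Fin r3),
      (fun i => ∑ j, ∑ k, V0 j μ * W0 k ν * A i j k) ∈
        Submodule.span ℝ ((Set.range fun a => (fun i => U0 i a)) ∪
          (Set.range fun s => (fun i => U1 i s))))
    (hspanV : ∀ (lam : Fin r1) (ν : Fin r3),
      (fun j => ∑ i, ∑ k, U0 i lam * W0 k ν * A i j k) ∈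
        Submodule.span ℝ ((Set.range fun a => (fun j => V0 j a)) ∪
          (Set.range fun s => (fun j => V1 j s))))
    (hspanW : ∀ (lam : Fin r1) (μ : Fin r2),
      (fun k => ∑ i, ∑ j, U0 i lam * V0 j μ * A i j k) ∈
        Submodule.span ℝ ((Set.range fun a => (fun k => W0 k a)) ∪
          (Set.range fun s => (fun k => W1 k s))))
    -- completions (U₀ U⊥), (V₀ V⊥), (W₀ W⊥) to orthogonal matrices:
    (Uperp : Matrix (Fin l) (Fin t1) ℝ) (Vperp : Matrix (Fin m) (Fin t2) ℝ)
    (Wperp : Matrix (Fin n) (Fin t3) ℝ)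
    (hUp : Uperpᵀ * Uperp = 1) (hUp0 : Uperpᵀ * U0 = 0)
    (hUfull : U0 * U0ᵀ + Uperp * Uperpᵀ = 1)
    (hVp : Vperpᵀ * Vperp = 1) (hVp0 : Vperpᵀ * V0 = 0)
    (hVfull : V0 * V0ᵀ + Vperp * Vperpᵀ = 1)
    (hWp : Wperpᵀ * Wperp = 1) (hWp0 : Wperpᵀ * W0 = 0)
    (hWfull : W0 * W0ᵀ + Wperp * Wperpᵀ = 1) :
    msq (pc1 (contr A U0 V0 W0) (contr A Uperp V0 W0)) +
    msq (pc2 (contr A U0 V0 W0) (contr A U0 Vperp W0)) +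
    msq (pc3 (contr A U0 V0 W0) (contr A U0 V0 Wperp))
      =
    msq (pc1 (contr A U0 V0 W0) (contr A U1 V0 W0)) +
    msq (pc2 (contr A U0 V0 W0) (contr A U0 V1 W0)) +
    msq (pc3 (contr A U0 V0 W0) (contr A U0 V0 W1)) := by
  have h1 := mode1' A U0 V0 W0 U1 Uperp hU0 hU1 hU10 hUp0 hUfull hspanU
  have e2 : ∀ {p' : ℕ} (X : Matrix (Fin m) (Fin p') ℝ),
      pc2 (contr A U0 V0 W0) (contr A U0 X W0)
        = pc1 (contr (fun j i k => A i j k) V0 U0 W0)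
            (contr (fun j i k => A i j k) X U0 W0) := by
    intro p' X
    funext a b
    simp only [pc1, pc2]
    exact Finset.sum_congr rfl fun μ _ => Finset.sum_congr rfl fun ν _ => by
      rw [contr_swap12' A U0 V0 W0 μ a ν, contr_swap12' A U0 X W0 μ b ν]
  have h2 : msq (pc2 (contr A U0 V0 W0) (contr A U0 Vperp W0)) =
      msq (pc2 (contr A U0 V0 W0) (contr A U0 V1 W0)) := by
    rw [e2 Vperp, e2 V1]
    exact mode1' (fun j i k => A i j k) V0 U0 W0 V1 Vperp hV0 hV1 hV10 hVp0 hVfull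
      (fun μ ν => hspanV μ ν)
  have e3 : ∀ {p' : ℕ} (X : Matrix (Fin n) (Fin p') ℝ),
      pc3 (contr A U0 V0 W0) (contr A U0 V0 X)
        = pc1 (contr (fun k j i => A i j k) W0 V0 U0)
            (contr (fun k j i => A i j k) X V0 U0) := by
    intro p' X
    funext a b
    simp only [pc1, pc3]
    rw [Finset.sum_comm]
    exact Finset.sum_congr rfl fun μ _ => Finset.sum_congr rfl fun ν _ => by
      rw [contr_swap13' A U0 V0 W0 ν μ a, contr_swap13' A U0 V0 X ν μ b]
  have h3 : msq (pc3 (contr A U0 V0 W0) (contr A U0 V0 Wperp)) =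
      msq (pc3 (contr A U0 V0 W0) (contr A U0 V0 W1)) := by
    rw [e3 Wperp, e3 W1]
    refine mode1' (fun k j i => A i j k) W0 V0 U0 W1 Wperp hW0 hW1 hW10 hWp0 hWfull ?_
    intro μ ν
    have heq : (fun k => ∑ j, ∑ i, V0 j μ * U0 i ν * A i j k)
        = (fun k => ∑ i, ∑ j, U0 i ν * V0 j μ * A i j k) := by
      funext k
      rw [Finset.sum_comm]
      exact Finset.sum_congr rfl fun i _ => Finset.sum_congr rfl fun j _ => by ring
    show (fun k => ∑ j, ∑ i, V0 j μ * U0 i ν * A i j k) ∈ _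
    rw [heq]
    exact hspanW ν μ
  rw [h1, h2, h3]
end

section
/- Under the hypotheses of the block-Krylov gradient proposition, if the Grassmann gradient components vanish, i.e., ⟨H₀, H₁¹⟩_{−1} = 0, ⟨H₀, H₁²⟩_{−2} = 0, ⟨H₀, H₁³⟩_{−3} = 0, then (U₀,V₀,W₀) is a stationary point of Φ(U,V,W) = ‖A·(U,V,W)‖² in the sense that ⟨F, F⊥ᵏ⟩_{−k} = 0 for k = 1,2,3, where F = A·(U₀,V₀,W₀) and F⊥¹ = A·(U⊥,V₀,W₀) with (U₀ U⊥) orthogonal (analogously for modes 2, 3). -/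
open scoped BigOperators
open Matrix

private lemma sum_comm3 {α β γ : Type*} [Fintype α] [Fintype β] [Fintype γ]
    (f : α → β → γ → ℝ) :
    ∑ a, ∑ b, ∑ c, f a b c = ∑ c, ∑ a, ∑ b, f a b c := by
  calc ∑ a, ∑ b, ∑ c, f a b c
      = ∑ a, ∑ c, ∑ b, f a b c := Finset.sum_congr rfl fun a _ => Finset.sum_comm
    _ = ∑ c, ∑ a, ∑ b, f a b c := Finset.sum_comm

private lemma pc1_reduce {l m n r1 r2 r3 t : ℕ} (A : Fin l → Fin m → Fin n → ℝ)
    (F : Fin r1 → Fin r2 → Fin r3 → ℝ)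
    (V0 : Matrix (Fin m) (Fin r2) ℝ) (W0 : Matrix (Fin n) (Fin r3) ℝ)
    (X : Matrix (Fin l) (Fin t) ℝ) (a : Fin r1) (b : Fin t) :
    pc1 F (contr A X V0 W0) a b =
      ∑ i, (∑ μ, ∑ ν, F a μ ν * ∑ j, ∑ k, V0 j μ * W0 k ν * A i j k) * X i b := by
  calc pc1 F (contr A X V0 W0) a b
      = ∑ μ, ∑ ν, ∑ i, F a μ ν * (∑ j, ∑ k, X i b * V0 j μ * W0 k ν * A i j k) := by
        simp [pc1, contr, Finset.mul_sum]
    _ = ∑ i, ∑ μ, ∑ ν, F a μ ν * (∑ j, ∑ k, X i b * V0 j μ * W0 k ν * A i j k) :=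
        sum_comm3 _
    _ = ∑ i, (∑ μ, ∑ ν, F a μ ν * ∑ j, ∑ k, V0 j μ * W0 k ν * A i j k) * X i b := by
        refine Finset.sum_congr rfl fun i _ => ?_
        simp only [Finset.mul_sum, Finset.sum_mul]
        exact Finset.sum_congr rfl fun μ _ => Finset.sum_congr rfl fun ν _ =>
          Finset.sum_congr rfl fun j _ => Finset.sum_congr rfl fun k _ => by ring

private lemma pc2_reduce {l m n r1 r2 r3 t : ℕ} (A : Fin l → Fin m → Fin n → ℝ)
    (F : Fin r1 → Fin r2 → Fin r3 → ℝ)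
    (U0 : Matrix (Fin l) (Fin r1) ℝ) (W0 : Matrix (Fin n) (Fin r3) ℝ)
    (X : Matrix (Fin m) (Fin t) ℝ) (a : Fin r2) (b : Fin t) :
    pc2 F (contr A U0 X W0) a b =
      ∑ j, (∑ lam, ∑ ν, F lam a ν * ∑ i, ∑ k, U0 i lam * W0 k ν * A i j k) * X j b := by
  calc pc2 F (contr A U0 X W0) a b
      = ∑ lam, ∑ ν, ∑ j, F lam a ν * (∑ i, ∑ k, X j b * U0 i lam * W0 k ν * A i j k) := by
        simp only [pc2, contr, Finset.mul_sum]
        refine Finset.sum_congr rfl fun lam _ => Finset.sum_congr rfl fun ν _ => ?_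
        rw [Finset.sum_comm]
        exact Finset.sum_congr rfl fun j _ => Finset.sum_congr rfl fun i _ =>
          Finset.sum_congr rfl fun k _ => by ring
    _ = ∑ j, ∑ lam, ∑ ν, F lam a ν * (∑ i, ∑ k, X j b * U0 i lam * W0 k ν * A i j k) :=
        sum_comm3 _
    _ = ∑ j, (∑ lam, ∑ ν, F lam a ν * ∑ i, ∑ k, U0 i lam * W0 k ν * A i j k) * X j b := by
        refine Finset.sum_congr rfl fun j _ => ?_
        simp only [Finset.mul_sum, Finset.sum_mul]
        exact Finset.sum_congr rfl fun lam _ => Finset.sum_congr rfl fun ν _ =>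
          Finset.sum_congr rfl fun i _ => Finset.sum_congr rfl fun k _ => by ring

private lemma pc3_reduce {l m n r1 r2 r3 t : ℕ} (A : Fin l → Fin m → Fin n → ℝ)
    (F : Fin r1 → Fin r2 → Fin r3 → ℝ)
    (U0 : Matrix (Fin l) (Fin r1) ℝ) (V0 : Matrix (Fin m) (Fin r2) ℝ)
    (X : Matrix (Fin n) (Fin t) ℝ) (a : Fin r3) (b : Fin t) :
    pc3 F (contr A U0 V0 X) a b =
      ∑ k, (∑ lam, ∑ μ, F lam μ a * ∑ i, ∑ j, U0 i lam * V0 j μ * A i j k) * X k b := by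
  calc pc3 F (contr A U0 V0 X) a b
      = ∑ lam, ∑ μ, ∑ k, F lam μ a * (∑ i, ∑ j, X k b * U0 i lam * V0 j μ * A i j k) := by
        simp only [pc3, contr, Finset.mul_sum]
        refine Finset.sum_congr rfl fun lam _ => Finset.sum_congr rfl fun μ _ => ?_
        rw [sum_comm3]
        exact Finset.sum_congr rfl fun k _ => Finset.sum_congr rfl fun i _ =>
          Finset.sum_congr rfl fun j _ => by ring
    _ = ∑ k, ∑ lam, ∑ μ, F lam μ a * (∑ i, ∑ j, X k b * U0 i lam * V0 j μ * A i j k) :=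
        sum_comm3 _
    _ = ∑ k, (∑ lam, ∑ μ, F lam μ a * ∑ i, ∑ j, U0 i lam * V0 j μ * A i j k) * X k b := by
        refine Finset.sum_congr rfl fun k _ => ?_
        simp only [Finset.mul_sum, Finset.sum_mul]
        exact Finset.sum_congr rfl fun lam _ => Finset.sum_congr rfl fun μ _ =>
          Finset.sum_congr rfl fun i _ => Finset.sum_congr rfl fun j _ => by ring

private lemma span_perp_zero {l r1 s1 t1 : ℕ} (U0 : Matrix (Fin l) (Fin r1) ℝ)
    (U1 : Matrix (Fin l) (Fin s1) ℝ) (Uperp : Matrix (Fin l) (Fin t1) ℝ)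
    (hU1 : U1ᵀ * U1 = 1) (hU10 : U1ᵀ * U0 = 0) (hUp0 : Uperpᵀ * U0 = 0)
    (v : Fin l → ℝ)
    (hv : v ∈ Submodule.span ℝ ((Set.range fun a => (fun i => U0 i a)) ∪
          (Set.range fun s => (fun i => U1 i s))))
    (hvU1 : ∀ s, ∑ i, v i * U1 i s = 0) (b : Fin t1) :
    ∑ i, v i * Uperp i b = 0 := by
  rw [Submodule.span_union, Submodule.mem_sup] at hv
  obtain ⟨x, hx, y, hy, rfl⟩ := hv
  rw [Submodule.mem_span_range_iff_exists_fun ℝ] at hx hy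
  obtain ⟨c, hc⟩ := hx
  obtain ⟨d, hd⟩ := hy
  have hx' : ∀ i, x i = ∑ p, c p * U0 i p := fun i => by
    rw [← hc]; simp [Finset.sum_apply]
  have hy' : ∀ i, y i = ∑ q, d q * U1 i q := fun i => by
    rw [← hd]; simp [Finset.sum_apply]
  have key : ∀ (t : ℕ) (M : Matrix (Fin l) (Fin t) ℝ) (b : Fin t),
      ∑ i, (x + y) i * M i b =
        (∑ p, c p * ∑ i, U0 i p * M i b) + ∑ q, d q * ∑ i, U1 i q * M i b := by
    intro t M b
    have e : ∀ i, (x + y) i * M i b =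
        (∑ p, c p * (U0 i p * M i b)) + ∑ q, d q * (U1 i q * M i b) := by
      intro i
      simp [hx' i, hy' i, add_mul, Finset.sum_mul, mul_assoc]
    rw [Finset.sum_congr rfl fun i _ => e i, Finset.sum_add_distrib]
    congr 1 <;> rw [Finset.sum_comm] <;> simp [Finset.mul_sum]
  have e1 : ∀ q s, ∑ i, U1 i q * U1 i s = if q = s then 1 else 0 := fun q s => by
    have := congrFun (congrFun hU1 q) s
    simpa [Matrix.mul_apply, Matrix.transpose_apply, Matrix.one_apply] using this
  have e0 : ∀ s p, (∑ i, U0 i p * U1 i s) = 0 := fun s p => by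
    have := congrFun (congrFun hU10 s) p
    simpa [Matrix.mul_apply, Matrix.transpose_apply, mul_comm] using this
  have hd0 : ∀ s, d s = 0 := by
    intro s
    have h := hvU1 s
    rw [key] at h
    simpa [e0 s, e1, mul_ite] using h
  have ep : ∀ p, (∑ i, U0 i p * Uperp i b) = 0 := fun p => by
    have := congrFun (congrFun hUp0 b) p
    simpa [Matrix.mul_apply, Matrix.transpose_apply, mul_comm] using this
  rw [key]
  simp [ep, hd0]

theorem vanishing_gradient_stationary {l m n r1 r2 r3 s1 s2 s3 : ℕ}
    (A : Fin l → Fin m → Fin n → ℝ)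
    (U0 : Matrix (Fin l) (Fin r1) ℝ) (V0 : Matrix (Fin m) (Fin r2) ℝ)
    (W0 : Matrix (Fin n) (Fin r3) ℝ)
    (U1 : Matrix (Fin l) (Fin s1) ℝ) (V1 : Matrix (Fin m) (Fin s2) ℝ)
    (W1 : Matrix (Fin n) (Fin s3) ℝ)
    (hU0 : U0ᵀ * U0 = 1) (hV0 : V0ᵀ * V0 = 1) (hW0 : W0ᵀ * W0 = 1)
    (hU1 : U1ᵀ * U1 = 1) (hV1 : V1ᵀ * V1 = 1) (hW1 : W1ᵀ * W1 = 1)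
    (hU10 : U1ᵀ * U0 = 0) (hV10 : V1ᵀ * V0 = 0) (hW10 : W1ᵀ * W0 = 0)
    (hspanU : ∀ (μ : Fin r2) (ν : Fin r3),
      (fun i => ∑ j, ∑ k, V0 j μ * W0 k ν * A i j k) ∈
        Submodule.span ℝ ((Set.range fun a => (fun i => U0 i a)) ∪
          (Set.range fun s => (fun i => U1 i s))))
    (hspanV : ∀ (lam : Fin r1) (ν : Fin r3),
      (fun j => ∑ i, ∑ k, U0 i lam * W0 k ν * A i j k) ∈
        Submodule.span ℝ ((Set.range fun a => (fun j => V0 j a)) ∪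
          (Set.range fun s => (fun j => V1 j s))))
    (hspanW : ∀ (lam : Fin r1) (μ : Fin r2),
      (fun k => ∑ i, ∑ j, U0 i lam * V0 j μ * A i j k) ∈
        Submodule.span ℝ ((Set.range fun a => (fun k => W0 k a)) ∪
          (Set.range fun s => (fun k => W1 k s))))
    -- vanishing of the gradient components:
    (h1 : pc1 (contr A U0 V0 W0) (contr A U1 V0 W0) = 0)
    (h2 : pc2 (contr A U0 V0 W0) (contr A U0 V1 W0) = 0)
    (h3 : pc3 (contr A U0 V0 W0) (contr A U0 V0 W1) = 0) :
    (∀ (t1 : ℕ) (Uperp : Matrix (Fin l) (Fin t1) ℝ),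
      Uperpᵀ * Uperp = 1 → Uperpᵀ * U0 = 0 → U0 * U0ᵀ + Uperp * Uperpᵀ = 1 →
      pc1 (contr A U0 V0 W0) (contr A Uperp V0 W0) = 0) ∧
    (∀ (t2 : ℕ) (Vperp : Matrix (Fin m) (Fin t2) ℝ),
      Vperpᵀ * Vperp = 1 → Vperpᵀ * V0 = 0 → V0 * V0ᵀ + Vperp * Vperpᵀ = 1 →
      pc2 (contr A U0 V0 W0) (contr A U0 Vperp W0) = 0) ∧
    (∀ (t3 : ℕ) (Wperp : Matrix (Fin n) (Fin t3) ℝ),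
      Wperpᵀ * Wperp = 1 → Wperpᵀ * W0 = 0 → W0 * W0ᵀ + Wperp * Wperpᵀ = 1 →
      pc3 (contr A U0 V0 W0) (contr A U0 V0 Wperp) = 0) := by
  refine ⟨?_, ?_, ?_⟩
  · intro t1 Uperp hUp1 hUp0 _
    ext a b
    rw [Matrix.zero_apply, pc1_reduce]
    refine span_perp_zero U0 U1 Uperp hU1 hU10 hUp0
      (fun i => ∑ μ, ∑ ν, contr A U0 V0 W0 a μ ν * ∑ j, ∑ k, V0 j μ * W0 k ν * A i j k)
      ?_ ?_ b
    · have he : (fun i => ∑ μ, ∑ ν, contr A U0 V0 W0 a μ ν *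
            ∑ j, ∑ k, V0 j μ * W0 k ν * A i j k) =
          ∑ μ, ∑ ν, contr A U0 V0 W0 a μ ν •
            (fun i => ∑ j, ∑ k, V0 j μ * W0 k ν * A i j k) := by
        funext i; simp [Finset.sum_apply]
      rw [he]
      exact Submodule.sum_mem _ fun μ _ => Submodule.sum_mem _ fun ν _ =>
        Submodule.smul_mem _ _ (hspanU μ ν)
    · intro s
      have h := congrFun (congrFun h1 a) s
      rw [pc1_reduce] at h
      simpa using h
  · intro t2 Vperp hVp1 hVp0 _
    ext a b
    rw [Matrix.zero_apply, pc2_reduce]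
    refine span_perp_zero V0 V1 Vperp hV1 hV10 hVp0
      (fun j => ∑ lam, ∑ ν, contr A U0 V0 W0 lam a ν * ∑ i, ∑ k, U0 i lam * W0 k ν * A i j k)
      ?_ ?_ b
    · have he : (fun j => ∑ lam, ∑ ν, contr A U0 V0 W0 lam a ν *
            ∑ i, ∑ k, U0 i lam * W0 k ν * A i j k) =
          ∑ lam, ∑ ν, contr A U0 V0 W0 lam a ν •
            (fun j => ∑ i, ∑ k, U0 i lam * W0 k ν * A i j k) := by
        funext j; simp [Finset.sum_apply]
      rw [he]
      exact Submodule.sum_mem _ fun lam _ => Submodule.sum_mem _ fun ν _ =>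
        Submodule.smul_mem _ _ (hspanV lam ν)
    · intro s
      have h := congrFun (congrFun h2 a) s
      rw [pc2_reduce] at h
      simpa using h
  · intro t3 Wperp hWp1 hWp0 _
    ext a b
    rw [Matrix.zero_apply, pc3_reduce]
    refine span_perp_zero W0 W1 Wperp hW1 hW10 hWp0
      (fun k => ∑ lam, ∑ μ, contr A U0 V0 W0 lam μ a * ∑ i, ∑ j, U0 i lam * V0 j μ * A i j k)
      ?_ ?_ b
    · have he : (fun k => ∑ lam, ∑ μ, contr A U0 V0 W0 lam μ a *
            ∑ i, ∑ j, U0 i lam * V0 j μ * A i j k) =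
          ∑ lam, ∑ μ, contr A U0 V0 W0 lam μ a •
            (fun k => ∑ i, ∑ j, U0 i lam * V0 j μ * A i j k) := by
        funext k; simp [Finset.sum_apply]
      rw [he]
      exact Submodule.sum_mem _ fun lam _ => Submodule.sum_mem _ fun μ _ =>
        Submodule.smul_mem _ _ (hspanW lam μ)
    · intro s
      have h := congrFun (congrFun h3 a) s
      rw [pc3_reduce] at h
      simpa using h
end

section
/- (Matrix Krylov-Schur truncation preserves the Krylov decomposition.) Suppose A U_k = U_k H_k + β_k u_{k+1} e_kᵀ with U_kᵀU_k = I_k and U_kᵀu_{k+1} = 0, and let H_k = Q T Qᵀ be a real Schur-type decomposition with Q orthogonal and T block upper triangular, partitioned as Q = [Q₁ Q₂], T = [[T₁₁, T₁₂],[0, T₂₂]] with Q₁ ∈ ℝ^{k×r}. Then A Û_r = Û_r T₁₁ + u_{k+1} b₁ᵀ, where Û_r = U_k Q₁ and b₁ = Q₁ᵀ e_k β_k; moreover Û_rᵀÛ_r = I_r and Û_rᵀ u_{k+1} = 0. -/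
open scoped BigOperators
open Matrix

theorem krylov_schur_truncation {n k' r : ℕ} (hr : r ≤ k' + 1)
    (A : Matrix (Fin n) (Fin n) ℝ) (Uk : Matrix (Fin n) (Fin (k' + 1)) ℝ)
    (u : Fin n → ℝ) (Hk : Matrix (Fin (k' + 1)) (Fin (k' + 1)) ℝ) (β : ℝ)
    (hUk : Ukᵀ * Uk = 1) (hu : Ukᵀ.mulVec u = 0)
    -- the Krylov decomposition  A U_k = U_k H_k + β u e_kᵀ :
    (hKrylov : A * Uk
      = Uk * Hk + β • Matrix.vecMulVec u (Pi.single (Fin.last k') 1))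
    (Q T : Matrix (Fin (k' + 1)) (Fin (k' + 1)) ℝ)
    (hQ : Qᵀ * Q = 1) (hQ' : Q * Qᵀ = 1)
    (hSchur : T = Qᵀ * Hk * Q)
    -- block upper triangular partition: the (2,1) block of T vanishes
    (hT21 : ∀ i j : Fin (k' + 1), r ≤ (i : ℕ) → (j : ℕ) < r → T i j = 0) :
    A * (Uk * Q.submatrix id (Fin.castLE hr))
      = (Uk * Q.submatrix id (Fin.castLE hr))
          * T.submatrix (Fin.castLE hr) (Fin.castLE hr)
        + Matrix.vecMulVec u
            (fun j : Fin r => β * Q (Fin.last k') (Fin.castLE hr j)) ∧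
    (Uk * Q.submatrix id (Fin.castLE hr))ᵀ * (Uk * Q.submatrix id (Fin.castLE hr)) = 1 ∧
    (Uk * Q.submatrix id (Fin.castLE hr))ᵀ.mulVec u = 0 := by
  set f : Fin r → Fin (k' + 1) := Fin.castLE hr with hfdef
  have hinj : Function.Injective f := Fin.castLE_injective hr
  have hHQ : Hk * Q = Q * T := by
    rw [hSchur, ← Matrix.mul_assoc, ← Matrix.mul_assoc, hQ', one_mul]
  have hsum : ∀ (g : Fin (k' + 1) → ℝ), (∀ l : Fin (k' + 1), r ≤ (l : ℕ) → g l = 0) →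
      ∑ l, g l = ∑ l : Fin r, g (f l) := by
    intro g hg
    have e1 : ∑ l, g l = ∑ x ∈ Finset.univ.map ⟨f, hinj⟩, g x := by
      refine (Finset.sum_subset (Finset.subset_univ _) ?_).symm
      intro x _ hx
      refine hg x ?_
      by_contra h
      push_neg at h
      exact hx (Finset.mem_map.2 ⟨⟨(x : ℕ), h⟩, Finset.mem_univ _, Fin.ext rfl⟩)
    exact e1.trans (Finset.sum_map Finset.univ ⟨f, hinj⟩ g)
  have h1 : Hk * Q.submatrix id f = Q.submatrix id f * T.submatrix f f := by
    ext i j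
    have hQT : (Hk * Q) i (f j) = (Q * T) i (f j) := by rw [hHQ]
    rw [Matrix.mul_apply, Matrix.mul_apply] at hQT
    simp only [Matrix.mul_apply, Matrix.submatrix_apply, id_eq]
    rw [hQT]
    exact hsum _ (fun l hl => by rw [hT21 l (f j) hl j.isLt, mul_zero])
  have h2 : (β • Matrix.vecMulVec u (Pi.single (Fin.last k') 1)) * Q.submatrix id f
      = Matrix.vecMulVec u (fun j : Fin r => β * Q (Fin.last k') (f j)) := by
    ext i j
    simp [Matrix.mul_apply, Matrix.vecMulVec_apply, Pi.single_apply, mul_ite,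
      ite_mul, Finset.sum_ite_eq', mul_comm, mul_assoc, mul_left_comm]
  refine ⟨?_, ?_, ?_⟩
  · rw [← Matrix.mul_assoc, hKrylov, Matrix.add_mul, Matrix.mul_assoc, h1, h2,
      ← Matrix.mul_assoc]
  · have key : (Uk * Q.submatrix id f)ᵀ * (Uk * Q.submatrix id f)
        = (Q.submatrix id f)ᵀ * Q.submatrix id f := by
      rw [Matrix.transpose_mul, Matrix.mul_assoc, ← Matrix.mul_assoc Ukᵀ, hUk, Matrix.one_mul]
    rw [key]
    ext i j
    have hq : (Qᵀ * Q) (f i) (f j) = (1 : Matrix (Fin (k' + 1)) (Fin (k' + 1)) ℝ) (f i) (f j) := by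
      rw [hQ]
    rw [Matrix.mul_apply, Matrix.one_apply] at hq
    simp only [Matrix.transpose_apply] at hq
    simp only [Matrix.mul_apply, Matrix.transpose_apply, Matrix.submatrix_apply, id_eq]
    rw [hq, Matrix.one_apply]
    simp [hinj.eq_iff]
  · rw [Matrix.transpose_mul, ← Matrix.mulVec_mulVec, hu, Matrix.mulVec_zero]
end
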